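/- Let s, g ∈ ℝ and define Ã_H(q,p) := (q₁p₂ − q₂p₁)·p₂ − s·q₁/√(q₁² + q₂²) + (g/2)·q₁·q₂² for q ∈ ℝ² \ {0}, p ∈ ℝ². Then: (i) for every twice-differentiable curve q : I → ℝ² \ {0} satisfying the frozen-Hill equations q₁''(t) = −s·q₁(t)/‖q(t)‖³ + 2g·q₁(t) and q₂''(t) = −s·q₂(t)/‖q(t)‖³ + (g/2)·q₂(t), the function t ↦ Ã_H(q(t), q'(t)) is constant; (ii) for every c ≠ 0 and every point q ≠ 0 on either focused parabola {q₁ = c² − q₂²/(4c²)} or {q₁ = q₂²/(4c²) − c²}, the elastic reflection p' of any p ∈ ℝ² at that parabola at q satisfies Ã_H(q,p') = Ã_H(q,p). Hence the frozen Hill problem with centrifugal correction admits any focused parabola with the q₁-axis as its axis as an integrable reflection wall. -/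

import Mathlib

/-!
Along a solution the Kepler contributions to the derivative of `Ã_H` cancel, and so do the
quadratic ones coming from `g`. At a wall only the kinetic part `q₁p₂² − q₂p₁p₂` of `Ã_H`
changes, and a reflection in the normal `n` preserves this quadratic form iff `n` is an
eigenvector of its matrix, i.e. `2q₁n₁n₂ = q₂(n₁² − n₂²)`. That condition says that the
reflection in the tangent line sends the radius vector `q` to the `q₁`-axis: the focal property
of a parabola with focus `0` and axis the `q₁`-axis.
-/

/-- The frozen-Hill first integral
`Ã_H(q,p) = (q₁p₂ − q₂p₁)·p₂ − s·q₁/√(q₁²+q₂²) + (g/2)·q₁·q₂²`. -/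
noncomputable def hillA (s g : ℝ) (q p : ℝ × ℝ) : ℝ :=
  (q.1 * p.2 - q.2 * p.1) * p.2 - s * q.1 / Real.sqrt (q.1 ^ 2 + q.2 ^ 2)
    + g / 2 * q.1 * q.2 ^ 2

theorem Convex.eq_of_hasDerivWithinAt_eq_zero {E : Type*} [NormedAddCommGroup E]
    [NormedSpace ℝ E] {I : Set ℝ} {f : ℝ → E} (hI : Convex ℝ I)
    (hf : ∀ t ∈ I, HasDerivWithinAt f 0 I t) {x y : ℝ} (hx : x ∈ I) (hy : y ∈ I) :
    f x = f y := by
  have := hI.norm_image_sub_le_of_norm_hasDerivWithin_le (C := 0) hf (by simp) hy hx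
  rwa [zero_mul, norm_le_zero_iff, sub_eq_zero] at this

theorem Prod.sq_add_sq_pos {x : ℝ × ℝ} (hx : x ≠ 0) : 0 < x.1 ^ 2 + x.2 ^ 2 := by
  rcases eq_or_ne x.1 0 with h1 | h1
  · have h2 : x.2 ≠ 0 := fun h2 => hx (Prod.ext h1 h2)
    positivity
  · positivity

section
variable {I : Set ℝ} {q v : ℝ → ℝ × ℝ} {t : ℝ}

theorem HasDerivWithinAt.fst {w : ℝ × ℝ} (hq : HasDerivWithinAt q w I t) :
    HasDerivWithinAt (fun t => (q t).1) w.1 I t :=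
  HasFDerivWithinAt.fst hq

theorem HasDerivWithinAt.snd {w : ℝ × ℝ} (hq : HasDerivWithinAt q w I t) :
    HasDerivWithinAt (fun t => (q t).2) w.2 I t :=
  HasFDerivWithinAt.snd hq

theorem HasDerivWithinAt.sqrt_sq_add_sq {w : ℝ × ℝ} (hq : HasDerivWithinAt q w I t)
    (hq0 : q t ≠ 0) :
    HasDerivWithinAt (fun t => √((q t).1 ^ 2 + (q t).2 ^ 2))
      (((q t).1 * w.1 + (q t).2 * w.2) / √((q t).1 ^ 2 + (q t).2 ^ 2)) I t := by
  have hsum := (hq.fst.fun_pow 2).add (hq.snd.fun_pow 2)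
  refine (hsum.sqrt (Prod.sq_add_sq_pos hq0).ne').congr_deriv ?_
  simp only [Pi.add_apply, Nat.cast_ofNat, Nat.add_one_sub_one, pow_one]
  field_simp

theorem hasDerivWithinAt_hillA (s g : ℝ) {a : ℝ × ℝ} (hq0 : q t ≠ 0)
    (hq : HasDerivWithinAt q (v t) I t) (hv : HasDerivWithinAt v a I t) :
    HasDerivWithinAt (fun t => hillA s g (q t) (v t))
      (((q t).1 * a.2 - (q t).2 * a.1) * (v t).2
        + ((q t).1 * (v t).2 - (q t).2 * (v t).1)
          * (a.2 + s * (q t).2 / √((q t).1 ^ 2 + (q t).2 ^ 2) ^ 3)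
        + g / 2 * (q t).2 * ((q t).2 * (v t).1 + 2 * (q t).1 * (v t).2)) I t := by
  have hr := Real.sqrt_pos.2 (Prod.sq_add_sq_pos hq0)
  have hr2 := Real.sq_sqrt (Prod.sq_add_sq_pos hq0).le
  have := ((((hq.fst.mul hv.snd).sub (hq.snd.mul hv.fst)).mul hv.snd).sub
    ((hq.fst.const_mul s).div (hq.sqrt_sq_add_sq hq0) hr.ne')).add
    ((hq.fst.const_mul (g / 2)).mul (hq.snd.fun_pow 2))
  refine this.congr_deriv ?_
  simp only [Pi.sub_apply, Pi.mul_apply, Nat.cast_ofNat, Nat.add_one_sub_one, pow_one]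
  field_simp
  linear_combination (-2 * s * (v t).1) * hr2
end

noncomputable def elasticReflection (n p : ℝ × ℝ) : ℝ × ℝ :=
  p - (2 * ((p.1 * n.1 + p.2 * n.2) / (n.1 ^ 2 + n.2 ^ 2))) • n

theorem hillA_elasticReflection (s g : ℝ) {q n : ℝ × ℝ} (hn : n ≠ 0)
    (hfocal : 2 * q.1 * n.1 * n.2 = q.2 * (n.1 ^ 2 - n.2 ^ 2)) (p : ℝ × ℝ) :
    hillA s g q (elasticReflection n p) = hillA s g q p := by
  have hn2 := (Prod.sq_add_sq_pos hn).ne'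
  simp only [hillA, elasticReflection, Prod.fst_sub, Prod.snd_sub, Prod.smul_fst, Prod.smul_snd,
    smul_eq_mul]
  field_simp
  linear_combination (4 * (p.1 * n.1 + p.2 * n.2) * (n.2 * p.1 - n.1 * p.2)) * hfocal

/-- The frozen Hill problem with centrifugal correction
`q₁'' = −s·q₁/‖q‖³ + 2g·q₁, q₂'' = −s·q₂/‖q‖³ + (g/2)·q₂` admits any focused parabola
with the `q₁`-axis as its axis as an integrable reflection wall: `Ã_H` is constant
along its trajectories and invariant under elastic reflections at the focused
parabolae `{q₁ = c² − q₂²/(4c²)}` and `{q₁ = q₂²/(4c²) − c²}`. -/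
theorem stmt_16 (s g : ℝ) :
    (∀ I : Set ℝ, Convex ℝ I → ∀ q v : ℝ → ℝ × ℝ,
      (∀ t ∈ I, q t ≠ 0) →
      (∀ t ∈ I, HasDerivWithinAt q (v t) I t) →
      (∀ t ∈ I, HasDerivWithinAt v
        ((-(s * (q t).1 / Real.sqrt ((q t).1 ^ 2 + (q t).2 ^ 2) ^ 3) + 2 * g * (q t).1,
          -(s * (q t).2 / Real.sqrt ((q t).1 ^ 2 + (q t).2 ^ 2) ^ 3)
            + g / 2 * (q t).2) : ℝ × ℝ) I t) →
      ∀ t ∈ I, ∀ t' ∈ I, hillA s g (q t) (v t) = hillA s g (q t') (v t')) ∧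
    (∀ c : ℝ, c ≠ 0 → ∀ q p : ℝ × ℝ, q ≠ 0 →
      q.1 = c ^ 2 - q.2 ^ 2 / (4 * c ^ 2) →
      ∀ n p' : ℝ × ℝ, n = (1, q.2 / (2 * c ^ 2)) →
      p' = p - (2 * ((p.1 * n.1 + p.2 * n.2) / (n.1 ^ 2 + n.2 ^ 2))) • n →
      hillA s g q p' = hillA s g q p) ∧
    (∀ c : ℝ, c ≠ 0 → ∀ q p : ℝ × ℝ, q ≠ 0 →
      q.1 = q.2 ^ 2 / (4 * c ^ 2) - c ^ 2 →
      ∀ n p' : ℝ × ℝ, n = (1, -q.2 / (2 * c ^ 2)) →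
      p' = p - (2 * ((p.1 * n.1 + p.2 * n.2) / (n.1 ^ 2 + n.2 ^ 2))) • n →
      hillA s g q p' = hillA s g q p) := by
  refine ⟨?_, ?_, ?_⟩
  · intro I hI q v hq0 hq hv t ht t' ht'
    refine hI.eq_of_hasDerivWithinAt_eq_zero (f := fun t => hillA s g (q t) (v t))
      (fun u hu => ?_) ht ht'
    refine (hasDerivWithinAt_hillA s g (hq0 u hu) (hq u hu) (hv u hu)).congr_deriv ?_
    ring
  · rintro c hc q p - hq n p' rfl rfl
    exact hillA_elasticReflection s g (by simp) (by rw [hq]; field_simp; ring) p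
  · rintro c hc q p - hq n p' rfl rfl
    exact hillA_elasticReflection s g (by simp) (by rw [hq]; field_simp; ring) p
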